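/- arXiv:2207.08459 — 2 statements merged into one kernel-verified Lean document; each statement's English description precedes it below -/
import Mathlib

section
/- The countably infinite complete graph K^{ℵ₀} is not strongly immersed in the Farey graph. -/
open SimpleGraph

/-- Two walks (with arbitrary endpoints) are edge-disjoint. -/
def EdgeDisjW {V : Type*} {G : SimpleGraph V} {a b c d : V}
    (p : G.Walk a b) (q : G.Walk c d) : Prop :=
  ∀ e, e ∈ p.edges → e ∉ q.edges

/-- A graph is infinitely edge-connected: it has at least two vertices and
between any two distinct vertices there are infinitely many pairwise
edge-disjoint paths. -/
def InfEdgeConn {V : Type*} (G : SimpleGraph V) : Prop :=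
  (∃ u v : V, u ≠ v) ∧
    ∀ u v : V, u ≠ v →
      ∃ P : ℕ → G.Walk u v,
        (∀ n, (P n).IsPath) ∧ ∀ m n, m ≠ n → EdgeDisjW (P m) (P n)

/-- Infinite edge-connectivity of the subgraph spanned by a vertex set `S`
(used for graphs of the form "union of a family of paths", whose abstract
vertex set is `S`). -/
def InfEdgeConnOn {V : Type*} (G : SimpleGraph V) (S : Set V) : Prop :=
  (∃ u ∈ S, ∃ v ∈ S, u ≠ v) ∧
    ∀ u ∈ S, ∀ v ∈ S, u ≠ v →
      ∃ P : ℕ → G.Walk u v,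
        (∀ n, (P n).IsPath) ∧ ∀ m n, m ≠ n → EdgeDisjW (P m) (P n)

/-- `α` together with the family of paths `P` (one for each edge of `H`)
is a strong immersion of `H` in `G`. -/
def IsStrongImmersion {VH VG : Type*} (H : SimpleGraph VH) (G : SimpleGraph VG)
    (α : VH → VG) (P : ∀ ⦃u v : VH⦄, H.Adj u v → G.Walk (α u) (α v)) : Prop :=
  Function.Injective α ∧
  (∀ ⦃u v : VH⦄ (h : H.Adj u v), (P h).IsPath) ∧
  (∀ ⦃u v u' v' : VH⦄ (h : H.Adj u v) (h' : H.Adj u' v'),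
      s(u, v) ≠ s(u', v') → EdgeDisjW (P h) (P h')) ∧
  (∀ ⦃u v : VH⦄ (h : H.Adj u v), ∀ w ∈ (P h).support,
      (∃ z, α z = w) → w = α u ∨ w = α v)

/-- `H` is strongly immersed in `G`. -/
def StronglyImmersed {VH VG : Type*} (H : SimpleGraph VH) (G : SimpleGraph VG) : Prop :=
  ∃ α P, IsStrongImmersion H G α P

/-- `β` together with the family of paths `P` witnesses that `G` contains
a subdivision of `H`: the paths are internally disjoint and have no internal
vertex among the branch vertices. -/
def IsSubdivision {VH VG : Type*} (H : SimpleGraph VH) (G : SimpleGraph VG)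
    (β : VH → VG) (P : ∀ ⦃u v : VH⦄, H.Adj u v → G.Walk (β u) (β v)) : Prop :=
  Function.Injective β ∧
  (∀ ⦃u v : VH⦄ (h : H.Adj u v), (P h).IsPath) ∧
  (∀ ⦃u v u' v' : VH⦄ (h : H.Adj u v) (h' : H.Adj u' v'),
      s(u, v) ≠ s(u', v') → ∀ w, w ∈ (P h).support → w ∈ (P h').support →
        (w = β u ∨ w = β v) ∧ (w = β u' ∨ w = β v')) ∧
  (∀ ⦃u v : VH⦄ (h : H.Adj u v), ∀ w ∈ (P h).support,
      (∃ z, β z = w) → w = β u ∨ w = β v)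

/-- `H` is a topological minor of `G`. -/
def TopMinor {VH VG : Type*} (H : SimpleGraph VH) (G : SimpleGraph VG) : Prop :=
  ∃ β P, IsSubdivision H G β P

/-- The dyadic rationals of the unit interval: the vertices of the halved
Farey graph. -/
def DyadicSet : Set ℚ := {q | ∃ n k : ℕ, k ≤ 2 ^ n ∧ q = (k : ℚ) / 2 ^ n}

/-- The halved Farey graph: two dyadic rationals of `[0,1]` are adjacent iff
they are of the form `k/2^n` and `(k+1)/2^n`. -/
def halvedFarey : SimpleGraph DyadicSet where
  Adj a b := a ≠ b ∧ ∃ n k : ℕ, k + 1 ≤ 2 ^ n ∧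
    ((a.1 = (k : ℚ) / 2 ^ n ∧ b.1 = ((k : ℚ) + 1) / 2 ^ n) ∨
     (b.1 = (k : ℚ) / 2 ^ n ∧ a.1 = ((k : ℚ) + 1) / 2 ^ n))
  symm := by
    constructor
    rintro a b ⟨hne, n, k, hk, h⟩
    exact ⟨hne.symm, n, k, hk, h.symm⟩
  loopless := by constructor; rintro a ⟨hne, -⟩; exact hne rfl

/-- Adjacency in the Farey graph on `ℚ ∪ {∞}` (`none` is `∞ = ±1/0`). -/
def fareyAdj : Option ℚ → Option ℚ → Prop
  | some q, some r =>
      q.num * (r.den : ℤ) - r.num * (q.den : ℤ) = 1 ∨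
      q.num * (r.den : ℤ) - r.num * (q.den : ℤ) = -1
  | some q, none => q.den = 1
  | none, some r => r.den = 1
  | none, none => False

/-- The Farey graph. -/
def fareyGraph : SimpleGraph (Option ℚ) where
  Adj := fareyAdj
  symm := by
    constructor
    rintro (_ | q) (_ | r) h <;> simp only [fareyAdj] at * <;> omega
  loopless := by
    constructor
    rintro (_ | q) h <;> simp only [fareyAdj] at h <;> omega
/-- `u` occurs strictly before `v` on the list `l`. -/
def Before {V : Type*} (l : List V) (u v : V) : Prop := List.Sublist [u, v] l

/-- `l` is the (consecutive) portion of the list `R` starting at `u` and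
ending at `v`. -/
def IsPortion {V : Type*} (R : List V) (u v : V) (l : List V) : Prop :=
  (∃ pre post, R = pre ++ l ++ post) ∧ l.head? = some u ∧ l.getLast? = some v

/-- The union of a family of walks, as a graph on the ambient vertex set
(its abstract vertex set is `walkSupp P`). -/
def walkUnion {V : Type*} {G : SimpleGraph V} {x y : V}
    (P : ℕ → G.Walk x y) : SimpleGraph V where
  Adj u v := ∃ n, s(u, v) ∈ (P n).edges
  symm := by
    constructor
    rintro u v ⟨n, h⟩
    exact ⟨n, by rwa [Sym2.eq_swap]⟩
  loopless := by
    constructor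
    rintro v ⟨n, h⟩
    exact G.ne_of_adj ((P n).edges_subset_edgeSet h) rfl

/-- The vertices appearing on some walk of the family. -/
def walkSupp {V : Type*} {G : SimpleGraph V} {x y : V}
    (P : ℕ → G.Walk x y) : Set V := {v | ∃ n, v ∈ (P n).support}

/-- An `x`–`y` grain line in `G`. -/
structure GrainLine {V : Type*} (G : SimpleGraph V) (x y : V) where
  ne_xy : x ≠ y
  /-- The limit set `L`. -/
  L : Set V
  /-- The linear order `≤_L` on `L`. -/
  le : V → V → Prop
  /-- The pairwise edge-disjoint `x`–`y` paths. -/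
  P : ℕ → G.Walk x y
  isPath : ∀ n, (P n).IsPath
  edgeDisj : ∀ m n, m ≠ n → EdgeDisjW (P m) (P n)
  le_refl : ∀ v ∈ L, le v v
  le_trans : ∀ u ∈ L, ∀ v ∈ L, ∀ w ∈ L, le u v → le v w → le u w
  le_antisymm : ∀ u ∈ L, ∀ v ∈ L, le u v → le v u → u = v
  le_total : ∀ u ∈ L, ∀ v ∈ L, le u v ∨ le v u
  x_mem : x ∈ L
  y_mem : y ∈ L
  x_min : ∀ v ∈ L, le x v
  y_max : ∀ v ∈ L, le v y
  /-- (GL1): `L` is the set of vertices lying on a final segment of the paths. -/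
  gl1 : ∀ v : V, v ∈ L ↔ ∃ N : ℕ, ∀ n : ℕ, v ∈ (P n).support ↔ N ≤ n
  /-- (GL2): a vertex of some path not in `L` lies on no other path. -/
  gl2 : ∀ n : ℕ, ∀ v ∈ (P n).support, v ∉ L → ∀ m : ℕ, m ≠ n → v ∉ (P m).support
  /-- (GL3): for `n ≥ 1`, the path `P n` traverses the vertices of `L_{<n}`
  in the order given by `≤_L`. -/
  gl3 : ∀ n : ℕ, 1 ≤ n → ∀ u v : V, u ∈ L → v ∈ L →
      (∃ m < n, u ∈ (P m).support) → (∃ m < n, v ∈ (P m).support) →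
      u ≠ v → (le u v ↔ Before (P n).support u v)

namespace GrainLine

variable {V : Type*} {G : SimpleGraph V} {x y : V}

/-- The graph `⋃𝒫` defined by the grain line. -/
def union (gl : GrainLine G x y) : SimpleGraph V := walkUnion gl.P

/-- The vertex set of `⋃𝒫`. -/
def supp (gl : GrainLine G x y) : Set V := walkSupp gl.P

/-- The set `L_{<n}` of vertices of `L` of depth `< n`. -/
def Llt (gl : GrainLine G x y) (n : ℕ) : Set V :=
  {v | v ∈ gl.L ∧ ∃ m < n, v ∈ (gl.P m).support}

/-- The `𝒫`-depth of a vertex. -/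
noncomputable def vDepth (gl : GrainLine G x y) (v : V) : ℕ :=
  sInf {n | v ∈ (gl.P n).support}

/-- The `𝒫`-depth of an edge. -/
noncomputable def eDepth (gl : GrainLine G x y) (e : Sym2 V) : ℕ :=
  sInf {n | e ∈ (gl.P n).edges}

/-- `u` and `v` are the ends of a `𝒫`-segment of depth `d`: both lie in
`L_{<d}` and `v` is the successor of `u` in `(L_{<d}, ≤_L)`. -/
def IsSegEnds (gl : GrainLine G x y) (d : ℕ) (u v : V) : Prop :=
  u ∈ gl.Llt d ∧ v ∈ gl.Llt d ∧ u ≠ v ∧ gl.le u v ∧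
    ∀ z ∈ gl.Llt d, gl.le u z → gl.le z v → z = u ∨ z = v

/-- The grain line is well-structured: every vertex of a `𝒫`-segment
`u P_d v` lying in `L` belongs to the interval `[u,v]` of `(L, ≤_L)`. -/
def WellStructured (gl : GrainLine G x y) : Prop :=
  ∀ d u v, gl.IsSegEnds d u v →
    ∀ w ∈ gl.L, (w = u ∨ w = v ∨ List.Sublist [u, w, v] (gl.P d).support) →
      gl.le u w ∧ gl.le w v

/-- The grain line is free: the graph `⋃𝒫` it defines is infinitely
edge-connected. -/
def Free (gl : GrainLine G x y) : Prop := InfEdgeConnOn gl.union gl.supp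

/-- The grain line is wildly presented. -/
def WildlyPresented (gl : GrainLine G x y) : Prop :=
  ∀ n : ℕ, 1 ≤ n → ∀ u v : V, u ∈ gl.Llt n → v ∈ gl.Llt n → u ≠ v → gl.le u v →
    ∃ w ∈ gl.L, w ≠ u ∧ w ≠ v ∧ gl.le u w ∧ gl.le w v ∧
      List.Sublist [u, w, v] (gl.P n).support

end GrainLine

/-- `G` is a generalised halved Farey graph: it is defined by a grain line
satisfying (GL2') and (GL3'). -/
def IsGenHalvedFarey {V : Type*} (G : SimpleGraph V) : Prop :=
  ∃ (x y : V) (gl : GrainLine G x y),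
    (∀ v : V, v ∈ gl.L) ∧
    (∀ u v : V, gl.le u v ↔ (u = v ∨ ∃ n, Before (gl.P n).support u v)) ∧
    (∀ u v : V, G.Adj u v ↔ ∃ n, s(u, v) ∈ (gl.P n).edges)
/-- `{A, B}` is a compound-separation of `G`. -/
def IsCompoundSep {V : Type*} (G : SimpleGraph V) (A B : Set V) : Prop :=
  A ∪ B = Set.univ ∧ (A \ B).Nonempty ∧ (B \ A).Nonempty ∧ (A ∩ B).Finite ∧
    {p : V × V | G.Adj p.1 p.2 ∧ p.1 ∈ A \ B ∧ p.2 ∈ B \ A}.Finite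

/-- The separation `{A, B}` separates the vertices `u` and `v`. -/
def SepPair {V : Type*} (A B : Set V) (u v : V) : Prop :=
  (u ∈ A \ B ∧ v ∈ B \ A) ∨ (u ∈ B \ A ∧ v ∈ A \ B)

/-- The compound-separation `{A, B}` separates `u` and `v` minimally. -/
def MinSeps {V : Type*} (G : SimpleGraph V) (A B : Set V) (u v : V) : Prop :=
  SepPair A B u v ∧
    ∀ C D : Set V, IsCompoundSep G C D → C ∩ D ⊂ A ∩ B → ¬ SepPair C D u v

/-- `{A, B}` is a unitary compound-separation of `G` with separator `w`. -/
def IsUnitaryCSep {V : Type*} (G : SimpleGraph V) (A B : Set V) (w : V) : Prop :=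
  IsCompoundSep G A B ∧ A ∩ B = {w}

/-- `w` is a compound-cutvertex of `G`. -/
def IsCompoundCutvertex {V : Type*} (G : SimpleGraph V) (w : V) : Prop :=
  ∃ A B, IsUnitaryCSep G A B w

/-- `G` is `k`-compound-connected: no compound-separation of order `< k`
separates any two vertices. -/
def kCompConn {V : Type*} (G : SimpleGraph V) (k : ℕ) : Prop :=
  ∀ A B : Set V, IsCompoundSep G A B → (A ∩ B).ncard < k →
    ∀ u v : V, ¬ SepPair A B u v

/-- `u` and `v` cannot be separated by deleting finitely many edges. -/
def FinEdgeConn {V : Type*} (G : SimpleGraph V) (u v : V) : Prop :=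
  ∀ F : Set (Sym2 V), F.Finite → (G.deleteEdges F).Reachable u v

/-- `G` is a Π-graph: it is infinitely edge-connected but has no two vertices
linked by infinitely many pairwise internally disjoint paths. -/
def PiGraph {V : Type*} (G : SimpleGraph V) : Prop :=
  InfEdgeConn G ∧
    ∀ u v : V, u ≠ v →
      ¬ ∃ P : ℕ → G.Walk u v, (∀ n, (P n).IsPath) ∧
          ∀ m n, m ≠ n → ∀ w ∈ (P m).support, w ∈ (P n).support → w = u ∨ w = v

/-- `H` is a `k`-bounded minor of `G`: there are disjoint nonempty connected
branch sets of size `< k`. -/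
def IsBddMinor {VH VG : Type*} (H : SimpleGraph VH) (G : SimpleGraph VG) (k : ℕ) : Prop :=
  ∃ B : VH → Set VG,
    (∀ h, (B h).Nonempty) ∧
    (∀ h, (B h).Finite ∧ (B h).ncard < k) ∧
    (∀ h h', h ≠ h' → Disjoint (B h) (B h')) ∧
    (∀ h, (G.induce (B h)).Connected) ∧
    (∀ h h', H.Adj h h' → ∃ a ∈ B h, ∃ b ∈ B h', G.Adj a b)

/-- The order on oriented separations: `(A,B) ≤ (C,D)` iff `A ⊆ C` and `D ⊆ B`. -/
def osLE {V : Type*} (s t : Set V × Set V) : Prop := s.1 ⊆ t.1 ∧ t.2 ⊆ s.2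

/-- The reverse orientation of an oriented separation. -/
def swapSep {V : Type*} (s : Set V × Set V) : Set V × Set V := (s.2, s.1)

/-- Two (unordered) separations, given by representative orientations, are
nested: they have comparable orientations. -/
def NestedSep {V : Type*} (s t : Set V × Set V) : Prop :=
  osLE s t ∨ osLE t s ∨ osLE s (swapSep t) ∨ osLE (swapSep s) t

/-- `σ` is an orientation of the set `N` of separations which is a star. -/
def IsStarOrientation {V : Type*} (N σ : Set (Set V × Set V)) : Prop :=
  (∀ s ∈ N, s ∈ σ ∨ swapSep s ∈ σ) ∧
  (∀ s ∈ N, ¬ (s ∈ σ ∧ swapSep s ∈ σ)) ∧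
  (∀ t ∈ σ, t ∈ N ∨ swapSep t ∈ N) ∧
  (∀ s ∈ σ, ∀ t ∈ σ, s ≠ t → osLE s (swapSep t))

/-- The set `N` of unitary compound-separations is faithful to the
compound-cutvertex `w` in `G`. -/
def FaithfulToVert {V : Type*} (G : SimpleGraph V) (N : Set (Set V × Set V)) (w : V) : Prop :=
  (∃ σ, IsStarOrientation {s ∈ N | s.1 ∩ s.2 = {w}} σ) ∧
  ∀ u v : V, (∃ A B, IsUnitaryCSep G A B w ∧ SepPair A B u v) →
    ∃ s ∈ N, s.1 ∩ s.2 = {w} ∧ SepPair s.1 s.2 u v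

/-- The set `N` of unitary compound-separations is faithful to `G`. -/
def FaithfulSet {V : Type*} (G : SimpleGraph V) (N : Set (Set V × Set V)) : Prop :=
  ∀ w : V, IsCompoundCutvertex G w → FaithfulToVert G N w

/-- A set of graphs is typical for the class of infinitely edge-connected
graphs with regard to the topological minor relation. -/
def TypicalTopMinor (𝓗 : Set (Σ V : Type, SimpleGraph V)) : Prop :=
  ∀ (W : Type) (G : SimpleGraph W), InfEdgeConn G → ∃ H ∈ 𝓗, TopMinor H.2 G

/-!
For rationals `w₁ < w₃`, only finitely many Farey edges leave the open interval `(w₁, w₃)`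
without ending in `w₁` or `w₃`: an edge to `∞` starts at an integer, and an edge jumping over a
rational `w` has both denominators at most that of `w` (mediant property), while adjacent
rationals differ by at most `1`. Now take branch vertices `w₀ < w₁ < w₂ < w₃` of an immersion of
`K^ℵ₀`. Infinitely many branch vertices lie inside the interval or infinitely many outside it;
the paths joining them to `w₀`, respectively `w₂`, cannot pass through `w₁` or `w₃`, so each
uses one of the finitely many crossing edges, and two of them share one.
-/

theorem Set.Infinite.exists_lt_lt_lt {β : Type*} [LinearOrder β] {s : Set β} (hs : s.Infinite) :
    ∃ a ∈ s, ∃ b ∈ s, ∃ c ∈ s, ∃ d ∈ s, a < b ∧ b < c ∧ c < d := by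
  obtain ⟨t, hts, ht⟩ := hs.exists_subset_card_eq 4
  have hmem i : t.orderEmbOfFin ht i ∈ s := hts (t.orderEmbOfFin_mem ht i)
  have hlt {i j : Fin 4} (hij : i < j) := (t.orderEmbOfFin ht).strictMono hij
  exact ⟨_, hmem 0, _, hmem 1, _, hmem 2, _, hmem 3, hlt (by decide), hlt (by decide),
    hlt (by decide)⟩

theorem SimpleGraph.finite_setOf_adj_swap {V : Type*} {G : SimpleGraph V} {A C : Set V}
    (h : {p : V × V | G.Adj p.1 p.2 ∧ p.1 ∈ A ∧ p.2 ∈ C}.Finite) :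
    {p : V × V | G.Adj p.1 p.2 ∧ p.1 ∈ C ∧ p.2 ∈ A}.Finite :=
  (h.image Prod.swap).subset fun p ⟨hadj, hC, hA⟩ => ⟨p.swap, ⟨hadj.symm, hA, hC⟩, rfl⟩

namespace IsStrongImmersion

variable {VH V : Type*} {G : SimpleGraph V} {α : VH → V}
  {P : ∀ ⦃u v : VH⦄, (⊤ : SimpleGraph VH).Adj u v → G.Walk (α u) (α v)}

theorem finite_preimage_of_finite_cut (himm : IsStrongImmersion ⊤ G α P) {A C : Set V}
    (hAC : Disjoint A C) (hbranch : (A ∪ C)ᶜ ⊆ Set.range α)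
    (hcut : {p : V × V | G.Adj p.1 p.2 ∧ p.1 ∈ A ∧ p.2 ∈ C}.Finite)
    {u : VH} (hu : α u ∈ A) : (α ⁻¹' C).Finite := by
  obtain ⟨-, -, hdisj, hinternal⟩ := himm
  have hne : ∀ v ∈ α ⁻¹' C, u ≠ v := fun v hv h => hAC.ne_of_mem hu hv (congrArg α h)
  have hcross : ∀ v (hv : v ∈ α ⁻¹' C), ∃ p ∈ {p : V × V | G.Adj p.1 p.2 ∧ p.1 ∈ A ∧ p.2 ∈ C},
      s(p.1, p.2) ∈ (P (hne v hv)).edges := by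
    intro v hv
    obtain ⟨d, hd, hdA, hdA'⟩ :=
      (P (hne v hv)).exists_boundary_dart A hu (hAC.notMem_of_mem_right hv)
    refine ⟨d.toProd, ⟨d.adj, hdA, ?_⟩, List.mem_map_of_mem hd⟩
    by_contra hdC
    rcases hinternal _ _ ((P _).dart_snd_mem_support_of_mem_darts hd)
      (hbranch (by simp [hdA', hdC])) with h | h
    · exact hdA' (h ▸ hu)
    · exact hdC (h ▸ hv)
  have : Nonempty V := ⟨α u⟩
  choose! e he using hcross
  by_contra hinf
  obtain ⟨v, hv, v', hv', hvv', heq⟩ :=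
    Set.Infinite.exists_ne_map_eq_of_mapsTo hinf (fun v hv => (he v hv).1) hcut
  refine hdisj (hne v hv) (hne v' hv') (fun h => hvv' (Sym2.congr_right.mp h)) _ (he v hv).2 ?_
  exact heq ▸ (he v' hv').2

theorem finite_of_finite_cut (himm : IsStrongImmersion ⊤ G α P) {A C : Set V}
    (hAC : Disjoint A C) (hbranch : (A ∪ C)ᶜ ⊆ Set.range α) (hfin : (A ∪ C)ᶜ.Finite)
    (hcut : {p : V × V | G.Adj p.1 p.2 ∧ p.1 ∈ A ∧ p.2 ∈ C}.Finite)
    {a c : VH} (ha : α a ∈ A) (hc : α c ∈ C) : Finite VH := by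
  have hA : (α ⁻¹' A).Finite := himm.finite_preimage_of_finite_cut hAC.symm
    (by rwa [Set.union_comm]) (SimpleGraph.finite_setOf_adj_swap hcut) hc
  have hC : (α ⁻¹' C).Finite := himm.finite_preimage_of_finite_cut hAC hbranch hcut ha
  have hrest : (α ⁻¹' (A ∪ C)ᶜ).Finite := hfin.preimage himm.1.injOn
  rw [← Set.finite_univ_iff, ← Set.preimage_univ (f := α), ← Set.union_compl_self (A ∪ C),
    Set.preimage_union, Set.preimage_union]
  exact (hA.union hC).union hrest

end IsStrongImmersion

theorem Rat.finite_setOf_abs_le_den_le (M : ℚ) (D : ℕ) :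
    {q : ℚ | |q| ≤ M ∧ q.den ≤ D}.Finite := by
  refine (((Set.finite_Icc (-⌈M * D⌉) ⌈M * D⌉).prod (Set.finite_Icc 1 D)).image
    fun p : ℤ × ℕ => (p.1 / p.2 : ℚ)).subset ?_
  rintro q ⟨hq, hd⟩
  refine ⟨(q.num, q.den), ⟨?_, q.den_pos, hd⟩, q.num_div_den⟩
  have hnum : |(q.num : ℚ)| ≤ M * D := by
    rw [← q.mul_den_eq_num, abs_mul, Nat.abs_cast]
    exact mul_le_mul hq (by exact_mod_cast hd) (Nat.cast_nonneg _) ((abs_nonneg q).trans hq)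
  have hceil : ((|q.num| : ℤ) : ℚ) ≤ ⌈M * D⌉ := by
    rw [Int.cast_abs]; exact hnum.trans (Int.le_ceil _)
  exact abs_le.mp (Int.cast_le.mp hceil)

theorem fareyGraph_abs_sub_le_one {a b : ℚ} (h : fareyGraph.Adj (some a) (some b)) :
    |a - b| ≤ 1 := by
  have hdet : |((a.num * b.den - b.num * a.den : ℤ) : ℚ)| = 1 := by
    rcases h with h | h <;> simp [h]
  have hden : (1 : ℚ) ≤ a.den * b.den := by
    exact_mod_cast Nat.one_le_iff_ne_zero.mpr (Nat.mul_ne_zero a.den_nz b.den_nz)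
  calc |a - b| = |((a.num * b.den - b.num * a.den : ℤ) : ℚ)| / (a.den * b.den) := by
        rw [Rat.sub_def', Rat.mkRat_eq_div, abs_div]; push_cast; simp
    _ ≤ 1 := by rw [hdet, div_le_one (by linarith)]; exact hden

theorem fareyGraph_den_add_den_le {a b w : ℚ} (h : fareyGraph.Adj (some a) (some b))
    (haw : a < w) (hwb : w < b) : a.den + b.den ≤ w.den := by
  have hdet : a.num * (b.den : ℤ) - b.num * a.den = 1 ∨
      a.num * (b.den : ℤ) - b.num * a.den = -1 := h
  have h₁ : 1 ≤ w.num * (a.den : ℤ) - a.num * w.den := by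
    have := (Rat.lt_iff _ _).mp haw; omega
  have h₂ : 1 ≤ b.num * (w.den : ℤ) - w.num * b.den := by
    have := (Rat.lt_iff _ _).mp hwb; omega
  have key : (b.den : ℤ) * (w.num * a.den - a.num * w.den) +
      a.den * (b.num * w.den - w.num * b.den) = w.den * (b.num * a.den - a.num * b.den) := by
    ring
  have : (a.den : ℤ) + b.den ≤ w.den := by
    rcases hdet with hdet | hdet <;>
      nlinarith [Int.natCast_nonneg a.den, Int.natCast_nonneg b.den, Int.natCast_nonneg w.den]
  exact_mod_cast this

theorem fareyGraph_finite_cut (w₁ w₂ : ℚ) :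
    {p : Option ℚ × Option ℚ | fareyGraph.Adj p.1 p.2 ∧ p.1 ∈ some '' Set.Ioo w₁ w₂ ∧
      p.2 ∈ (some '' Set.Ioo w₁ w₂ ∪ {some w₁, some w₂})ᶜ}.Finite := by
  set M := max |w₁| |w₂| + 1
  set D := max w₁.den w₂.den
  have hB := Rat.finite_setOf_abs_le_den_le M D
  refine ((hB.image some).prod ((hB.image some).insert none)).subset ?_
  rintro ⟨_, d⟩ ⟨hadj, ⟨c, ⟨hw₁c, hcw₂⟩, rfl⟩, hd⟩
  have hc' : |c| ≤ max |w₁| |w₂| := abs_le_max_abs_abs hw₁c.le hcw₂.le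
  have hc : |c| ≤ M := by linarith
  rcases d with _ | d
  · have hden : c.den = 1 := hadj
    exact ⟨⟨c, ⟨hc, hden ▸ w₁.den_pos.trans_le (le_max_left _ _)⟩, rfl⟩, Set.mem_insert _ _⟩
  have hout : d < w₁ ∨ w₂ < d := by
    simp only [Set.mem_compl_iff, Set.mem_union, Set.mem_image, Set.mem_Ioo, Option.some.injEq,
      exists_eq_right, Set.mem_insert_iff, Set.mem_singleton_iff, not_or, not_and_or, not_lt] at hd
    obtain ⟨h | h, h₁, h₂⟩ := hd
    · exact .inl (lt_of_le_of_ne h h₁)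
    · exact .inr (lt_of_le_of_ne h (Ne.symm h₂))
  have hdM : |d| ≤ M := by
    have := abs_sub_abs_le_abs_sub d c
    rw [abs_sub_comm] at this
    have := fareyGraph_abs_sub_le_one hadj
    linarith
  have hdD : c.den ≤ D ∧ d.den ≤ D := by
    rcases hout with h | h
    · have := fareyGraph_den_add_den_le (SimpleGraph.Adj.symm hadj) h hw₁c
      omega
    · have := fareyGraph_den_add_den_le hadj hcw₂ h
      omega
  exact ⟨⟨c, ⟨hc, hdD.1⟩, rfl⟩, Set.mem_insert_of_mem _ ⟨d, ⟨hdM, hdD.2⟩, rfl⟩⟩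

theorem IsStrongImmersion.finite_of_fareyGraph {VH : Type*} {α : VH → Option ℚ}
    {P : ∀ ⦃u v : VH⦄, (⊤ : SimpleGraph VH).Adj u v → fareyGraph.Walk (α u) (α v)}
    (himm : IsStrongImmersion ⊤ fareyGraph α P) {w₀ w₁ w₂ w₃ : ℚ}
    (hw : ∀ w ∈ ({w₀, w₁, w₂, w₃} : Set ℚ), some w ∈ Set.range α)
    (h₀₁ : w₀ < w₁) (h₁₂ : w₁ < w₂) (h₂₃ : w₂ < w₃) : Finite VH := by
  set A := some '' Set.Ioo w₁ w₃
  set Z : Set (Option ℚ) := {some w₁, some w₃}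
  have hrest : (A ∪ (A ∪ Z)ᶜ)ᶜ ⊆ Z := fun x hx => by
    by_contra hxZ
    exact hx (Or.inr fun h => h.elim (fun hA => hx (Or.inl hA)) hxZ)
  have hZ : Z ⊆ Set.range α := Set.insert_subset (hw w₁ (by simp)) (by simpa using hw w₃)
  obtain ⟨a, ha⟩ := hw w₂ (by simp)
  obtain ⟨c, hc⟩ := hw w₀ (by simp)
  refine himm.finite_of_finite_cut (Set.disjoint_compl_right_iff_subset.mpr
    Set.subset_union_left) (hrest.trans hZ) ((Set.toFinite Z).subset hrest)
    (fareyGraph_finite_cut w₁ w₃) (a := a) (c := c) (ha ▸ ⟨w₂, ⟨h₁₂, h₂₃⟩, rfl⟩) ?_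
  rw [hc]
  simp only [A, Z, Set.mem_compl_iff, Set.mem_union, Set.mem_image, Set.mem_Ioo,
    Option.some.injEq, exists_eq_right, Set.mem_insert_iff, Set.mem_singleton_iff]
  grind

/-- `K^{ℵ₀}` is not strongly immersed in the Farey graph. -/
theorem Kaleph0_not_immersed_in_farey :
    ¬ StronglyImmersed (⊤ : SimpleGraph ℕ) fareyGraph := by
  rintro ⟨α, P, himm⟩
  have hS : (some ⁻¹' Set.range α).Infinite := by
    refine Set.Infinite.preimage' (((Set.infinite_range_of_injective himm.1).sdiff
      (Set.finite_singleton none)).mono ?_)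
    rintro x ⟨hx, hnone⟩
    exact ⟨hx, Option.ne_none_iff_exists.mp hnone⟩
  obtain ⟨w₀, h₀, w₁, h₁, w₂, h₂, w₃, h₃, h₀₁, h₁₂, h₂₃⟩ := hS.exists_lt_lt_lt
  refine (himm.finite_of_fareyGraph ?_ h₀₁ h₁₂ h₂₃).false
  rintro w (rfl | rfl | rfl | rfl) <;> assumption
end

section
/- If ((L,≤_L),(P_n)_{n∈ℕ}) is a wildly presented grain line, then the halved Farey graph is strongly immersed in the graph ⋃P defined by it. -/
open SimpleGraph

/-!
The dyadic `k / 2 ^ n` is sent to a vertex `A n k` of `L`, level by level: the points of level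
`n + 1` interleave those of level `n` with new points that wildness provides strictly between
consecutive old ones, chosen of large `𝒫`-depth (only finitely many vertices of `L` have small
depth). The edge from `k / 2 ^ n` to `(k + 1) / 2 ^ n` is routed along the segment of
`P (c n + k)` between `A n k` and `A n (k + 1)`, where `c n` bounds the depths of the points
of level `n` and grows by at least `2 ^ n` per level, so distinct edges use distinct, hence
edge-disjoint, paths. A branch vertex inside such a segment is either a point of level `n`,
which (GL3) would place strictly between two consecutive points of level `n`, or a point added
later, which is too deep to lie on `P (c n + k)` at all.
-/

namespace SimpleGraph.Walk

variable {V : Type*} {G : SimpleGraph V}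

theorem exists_isSubwalk_of_sublist {s t u v : V} (p : G.Walk s t)
    (h : List.Sublist [u, v] p.support) : ∃ q : G.Walk u v, q.IsSubwalk p := by
  classical
  induction p with
  | nil => simp at h
  | @cons s s' t hadj p ih =>
    rw [support_cons, List.sublist_cons_iff] at h
    rcases h with h | ⟨r, hr, hv⟩
    · obtain ⟨q, hq⟩ := ih h
      exact ⟨q, hq.cons hadj⟩
    · obtain ⟨rfl, rfl⟩ := List.cons_eq_cons.mp hr
      replace hv : v ∈ p.support := List.singleton_sublist.mp hv
      refine ⟨cons hadj (p.takeUntil v hv), isSubwalk_of_append_left (p₂ := p.dropUntil v hv) ?_⟩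
      rw [cons_append, take_spec]

theorem IsSubwalk.sublist_of_mem_of_ne_start {s t u v w : V} {q : G.Walk u v} {p : G.Walk s t}
    (h : q.IsSubwalk p) (hw : w ∈ q.support) (hwu : w ≠ u) : List.Sublist [u, w] p.support := by
  have hsub : List.Sublist [u, w] q.support := by
    rw [← cons_tail_support] at hw ⊢
    exact (List.singleton_sublist.mpr ((List.mem_cons.mp hw).resolve_left hwu)).cons_cons u
  exact hsub.trans (isSubwalk_iff_support_isInfix.mp h).sublist

theorem IsSubwalk.sublist_of_mem_of_ne_end {s t u v w : V} {q : G.Walk u v} {p : G.Walk s t}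
    (h : q.IsSubwalk p) (hw : w ∈ q.support) (hwv : w ≠ v) : List.Sublist [w, v] p.support := by
  have hrev : q.reverse.IsSubwalk p.reverse := by
    obtain ⟨ru, rv, rfl⟩ := h
    exact ⟨rv.reverse, ru.reverse, by simp [append_assoc]⟩
  have := hrev.sublist_of_mem_of_ne_start (by simpa using hw) hwv
  simpa using List.reverse_sublist.mpr this

end SimpleGraph.Walk

theorem stronglyImmersed_of_forall_adj {VH VG : Type*} {H : SimpleGraph VH} {G : SimpleGraph VG}
    (α : VH → VG) (hα : Function.Injective α) (E : Sym2 VH → Set (Sym2 VG))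
    (hE : Pairwise fun e e' => Disjoint (E e) (E e'))
    (hpath : ∀ ⦃u v⦄, H.Adj u v → ∃ p : G.Walk (α u) (α v), p.IsPath ∧
      (∀ e ∈ p.edges, e ∈ E s(u, v)) ∧
      ∀ w ∈ p.support, w ∈ Set.range α → w = α u ∨ w = α v) :
    StronglyImmersed H G := by
  choose P hP using hpath
  refine ⟨α, P, hα, fun u v h => (hP h).1, ?_, fun u v h w hw hwα => (hP h).2.2 w hw hwα⟩
  intro u v u' v' h h' hne e he he'
  exact Set.disjoint_left.mp (hE hne) ((hP h).2.1 e he) ((hP h').2.1 e he')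

theorem exists_seq_of_exists_succ {α : Type*} {p : ℕ → α → Prop} {r : ℕ → α → α → Prop}
    (h₀ : ∃ a, p 0 a) (hsucc : ∀ n a, p n a → ∃ b, p (n + 1) b ∧ r n a b) :
    ∃ f : ℕ → α, ∀ n, p n (f n) ∧ r n (f n) (f (n + 1)) := by
  choose a₀ ha₀ using h₀
  choose g hg using hsucc
  let f : ∀ n, {a // p n a} :=
    fun n => Nat.rec ⟨a₀, ha₀⟩ (fun n b => ⟨g n b.1 b.2, (hg n b.1 b.2).1⟩) n
  exact ⟨fun n => (f n).1, fun n => ⟨(f n).2, (hg n _ _).2⟩⟩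

theorem exists_interleave {α : Type*} (f g : ℕ → α) :
    ∃ h : ℕ → α, ∀ k, h (2 * k) = f k ∧ h (2 * k + 1) = g k :=
  ⟨fun j => if j % 2 = 0 then f (j / 2) else g (j / 2),
    fun k => ⟨by simp, by simp [Nat.add_mod, Nat.mul_add_div]⟩⟩

theorem dyadic_eq_iff {n n' k k' : ℕ} :
    (k : ℚ) / 2 ^ n = (k' : ℚ) / 2 ^ n' ↔ k * 2 ^ n' = k' * 2 ^ n := by
  rw [div_eq_div_iff (by positivity) (by positivity)]
  exact_mod_cast Iff.rfl

noncomputable def dyadicMap {V : Type*} (A : ℕ → ℕ → V) (v : DyadicSet) : V :=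
  A v.2.choose v.2.choose_spec.choose

theorem exists_dyadicMap_eq {V : Type*} (A : ℕ → ℕ → V) (v : DyadicSet) :
    ∃ n k : ℕ, k ≤ 2 ^ n ∧ (v : ℚ) = k / 2 ^ n ∧ dyadicMap A v = A n k :=
  ⟨_, _, v.2.choose_spec.choose_spec.1, v.2.choose_spec.choose_spec.2, rfl⟩

namespace GrainLine

variable {V : Type*} {G : SimpleGraph V} {x y : V} (gl : GrainLine G x y)

def lt (u v : V) : Prop := gl.le u v ∧ u ≠ v

variable {gl}

theorem lt_trans {u v w : V} (hu : u ∈ gl.L) (hv : v ∈ gl.L) (hw : w ∈ gl.L)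
    (huv : gl.lt u v) (hvw : gl.lt v w) : gl.lt u w := by
  refine ⟨gl.le_trans u hu v hv w hw huv.1 hvw.1, ?_⟩
  rintro rfl
  exact huv.2 (gl.le_antisymm u hu v hv huv.1 hvw.1)

theorem lt_asymm {u v : V} (hu : u ∈ gl.L) (hv : v ∈ gl.L) (huv : gl.lt u v) : ¬ gl.lt v u :=
  fun hvu => huv.2 (gl.le_antisymm u hu v hv huv.1 hvu.1)

theorem mem_support_iff_vDepth_le {z : V} (hz : z ∈ gl.L) (n : ℕ) :
    z ∈ (gl.P n).support ↔ gl.vDepth z ≤ n := by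
  obtain ⟨N, hN⟩ := (gl.gl1 z).mp hz
  have hdepth : gl.vDepth z = N := by
    simp only [vDepth, hN]
    exact csInf_Ici
  rw [hN, hdepth]

theorem mem_Llt {z : V} (hz : z ∈ gl.L) {n : ℕ} (hzn : gl.vDepth z < n) : z ∈ gl.Llt n :=
  ⟨hz, gl.vDepth z, hzn, (mem_support_iff_vDepth_le hz _).mpr le_rfl⟩

theorem finite_setOf_vDepth_lt (T : ℕ) : {z | z ∈ gl.L ∧ gl.vDepth z < T}.Finite := by
  refine (Set.finite_Iio T).biUnion (fun m _ => (gl.P m).support.finite_toSet) |>.subset ?_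
  rintro z ⟨hz, hzT⟩
  exact Set.mem_biUnion hzT ((mem_support_iff_vDepth_le hz _).mpr le_rfl)

theorem le_iff_before {n : ℕ} (hn : 1 ≤ n) {u v : V} (hu : u ∈ gl.L) (hv : v ∈ gl.L)
    (hun : gl.vDepth u < n) (hvn : gl.vDepth v < n) (huv : u ≠ v) :
    gl.le u v ↔ Before (gl.P n).support u v :=
  gl.gl3 n hn u v hu hv (mem_Llt hu hun).2 (mem_Llt hv hvn).2 huv

theorem exists_lt_lt (hwp : gl.WildlyPresented) {u v : V} (hu : u ∈ gl.L) (hv : v ∈ gl.L)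
    (huv : gl.lt u v) : ∃ w ∈ gl.L, gl.lt u w ∧ gl.lt w v := by
  obtain ⟨w, hw, hwu, hwv, huw, hwv', -⟩ := hwp (max (gl.vDepth u) (gl.vDepth v) + 1) le_add_self
    u v (mem_Llt hu (by omega)) (mem_Llt hv (by omega)) huv.2 huv.1
  exact ⟨w, hw, ⟨huw, hwu.symm⟩, ⟨hwv', hwv⟩⟩

theorem exists_lt_lt_vDepth_ge (hwp : gl.WildlyPresented) (T : ℕ) {u v : V} (hu : u ∈ gl.L)
    (hv : v ∈ gl.L) (huv : gl.lt u v) :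
    ∃ w ∈ gl.L, gl.lt u w ∧ gl.lt w v ∧ T ≤ gl.vDepth w := by
  set S : V → Set V := fun v => {z | (z ∈ gl.L ∧ gl.vDepth z < T) ∧ gl.lt u z ∧ gl.lt z v}
  induction hN : (S v).ncard using Nat.strong_induction_on generalizing v with
  | _ N ih =>
  obtain ⟨w, hw, huw, hwv⟩ := exists_lt_lt hwp hu hv huv
  by_cases hT : T ≤ gl.vDepth w
  · exact ⟨w, hw, huw, hwv, hT⟩
  have hSw : S w ⊂ S v := by
    have hsub : S w ⊆ S v := fun z ⟨hz, huz, hzw⟩ => ⟨hz, huz, lt_trans hz.1 hw hv hzw hwv⟩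
    exact (Set.ssubset_iff_of_subset hsub).mpr
      ⟨w, ⟨⟨hw, not_le.mp hT⟩, huw, hwv⟩, fun hw' => hw'.2.2.2 rfl⟩
  have hcard : (S w).ncard < N :=
    hN ▸ Set.ncard_lt_ncard hSw ((finite_setOf_vDepth_lt T).subset fun z hz => hz.1)
  obtain ⟨w', hw', huw', hw'w, hT'⟩ := ih _ hcard hw huw rfl
  exact ⟨w', hw', huw', lt_trans hw' hw hv hw'w hwv, hT'⟩

theorem exists_isPath_between {m : ℕ} (hm : 1 ≤ m) {u v : V} (hu : u ∈ gl.L) (hv : v ∈ gl.L)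
    (hum : gl.vDepth u < m) (hvm : gl.vDepth v < m) (huv : gl.lt u v) :
    ∃ q : gl.union.Walk u v, q.IsPath ∧ (∀ e ∈ q.edges, e ∈ (gl.P m).edges) ∧
      (∀ w ∈ q.support, w ∈ (gl.P m).support) ∧
      ∀ w ∈ q.support, w ∈ gl.L → gl.vDepth w < m → w ≠ u → w ≠ v →
        gl.lt u w ∧ gl.lt w v := by
  have hunion : ∀ e ∈ (gl.P m).edges, e ∈ gl.union.edgeSet := by
    intro e he
    induction e using Sym2.ind with
    | _ a b => exact ⟨m, he⟩
  set p := (gl.P m).transfer gl.union hunion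
  have hp : p.support = (gl.P m).support := Walk.support_transfer _ _
  obtain ⟨q, hq⟩ := p.exists_isSubwalk_of_sublist <| by
    rw [hp]
    exact (le_iff_before hm hu hv hum hvm huv.2).mp huv.1
  refine ⟨q, Walk.isPath_of_isSubwalk hq ((gl.isPath m).transfer hunion),
    fun e he => by simpa [p] using hq.edges_subset he, fun w hw => hp ▸ hq.support_subset hw, ?_⟩
  intro w hw hwL hwm hwu hwv
  have huw := hp ▸ hq.sublist_of_mem_of_ne_start hw hwu
  have hwv' := hp ▸ hq.sublist_of_mem_of_ne_end hw hwv
  exact ⟨⟨(le_iff_before hm hu hwL hum hwm hwu.symm).mpr huw, hwu.symm⟩,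
    ⟨(le_iff_before hm hwL hv hwm hvm hwv).mpr hwv', hwv⟩⟩

variable (gl)

def IsLevel (n : ℕ) (a : ℕ → V) (c : ℕ) : Prop :=
  (∀ k ≤ 2 ^ n, a k ∈ gl.L ∧ gl.vDepth (a k) < c) ∧ ∀ k < 2 ^ n, gl.lt (a k) (a (k + 1))

def IsRefinement (n : ℕ) (a : ℕ → V) (c : ℕ) (a' : ℕ → V) (c' : ℕ) : Prop :=
  (∀ k, a' (2 * k) = a k) ∧ (∀ k < 2 ^ n, c + 2 ^ n ≤ gl.vDepth (a' (2 * k + 1))) ∧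
    c + 2 ^ n ≤ c'

variable {gl}

theorem isLevel_zero :
    gl.IsLevel 0 (fun k => if k = 0 then x else y) (max (gl.vDepth x) (gl.vDepth y) + 1) := by
  refine ⟨fun k hk => ?_, fun k hk => ?_⟩
  · obtain rfl | rfl : k = 0 ∨ k = 1 := by omega
    · exact ⟨gl.x_mem, by simp⟩
    · exact ⟨gl.y_mem, by simp⟩
  · obtain rfl : k = 0 := by omega
    exact ⟨gl.x_min y gl.y_mem, gl.ne_xy⟩

theorem IsLevel.exists_refinement (hwp : gl.WildlyPresented) {n : ℕ} {a : ℕ → V} {c : ℕ}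
    (h : gl.IsLevel n a c) : ∃ a' c', gl.IsLevel (n + 1) a' c' ∧ gl.IsRefinement n a c a' c' := by
  have : Nonempty V := ⟨x⟩
  choose! b hbL hab hba hbc using fun k (hk : k < 2 ^ n) =>
    exists_lt_lt_vDepth_ge hwp (c + 2 ^ n) (h.1 k hk.le).1 (h.1 (k + 1) hk).1 (h.2 k hk)
  obtain ⟨a', ha'⟩ := exists_interleave a b
  obtain ⟨M, hM⟩ : ∃ M, ∀ j ≤ 2 ^ (n + 1), gl.vDepth (a' j) < M :=
    ⟨(Finset.range (2 ^ (n + 1) + 1)).sup (fun j => gl.vDepth (a' j)) + 1, fun j hj =>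
      Nat.lt_succ_of_le (Finset.le_sup (f := fun j => gl.vDepth (a' j))
        (Finset.mem_range.mpr (by omega)))⟩
  refine ⟨a', max M (c + 2 ^ n), ⟨fun j hj => ?_, fun j hj => ?_⟩,
    fun k => (ha' k).1, fun k hk => (ha' k).2 ▸ hbc k hk, le_max_right _ _⟩
  · refine ⟨?_, (hM j hj).trans_le (le_max_left _ _)⟩
    obtain ⟨i, rfl | rfl⟩ := Nat.even_or_odd' j
    · exact (ha' i).1 ▸ (h.1 i (by omega)).1
    · exact (ha' i).2 ▸ hbL i (by omega)
  · obtain ⟨i, rfl | rfl⟩ := Nat.even_or_odd' j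
    · rw [(ha' i).1, (ha' i).2]
      exact hab i (by omega)
    · rw [(ha' i).2, show 2 * i + 1 + 1 = 2 * (i + 1) by ring, (ha' (i + 1)).1]
      exact hba i (by omega)

variable (gl)

structure DyadicScheme (A : ℕ → ℕ → V) (c : ℕ → ℕ) : Prop where
  isLevel (n : ℕ) : gl.IsLevel n (A n) (c n)
  isRefinement (n : ℕ) : gl.IsRefinement n (A n) (c n) (A (n + 1)) (c (n + 1))

def routeEdges (c : ℕ → ℕ) (e : Sym2 DyadicSet) : Set (Sym2 V) :=
  {f | ∃ n k : ℕ, k < 2 ^ n ∧ e.map Subtype.val = s((k : ℚ) / 2 ^ n, ((k : ℚ) + 1) / 2 ^ n) ∧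
    f ∈ (gl.P (c n + k)).edges}

variable {gl}

theorem exists_dyadicScheme (hwp : gl.WildlyPresented) : ∃ A c, gl.DyadicScheme A c := by
  obtain ⟨s, hs⟩ := exists_seq_of_exists_succ
    (p := fun n (s : (ℕ → V) × ℕ) => gl.IsLevel n s.1 s.2)
    (r := fun n s s' => gl.IsRefinement n s.1 s.2 s'.1 s'.2) ⟨(_, _), isLevel_zero⟩
    fun n s hs => by
      obtain ⟨a', c', h⟩ := hs.exists_refinement hwp
      exact ⟨(a', c'), h⟩
  exact ⟨fun n => (s n).1, fun n => (s n).2, fun n => (hs n).1, fun n => (hs n).2⟩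

namespace DyadicScheme

variable {A : ℕ → ℕ → V} {c : ℕ → ℕ} (hA : gl.DyadicScheme A c)
include hA

theorem mem_L {n k : ℕ} (hk : k ≤ 2 ^ n) : A n k ∈ gl.L := ((hA.isLevel n).1 k hk).1

theorem vDepth_lt {n k : ℕ} (hk : k ≤ 2 ^ n) : gl.vDepth (A n k) < c n :=
  ((hA.isLevel n).1 k hk).2

theorem apply_add_mul_two_pow (n k m : ℕ) : A (n + m) (k * 2 ^ m) = A n k := by
  induction m with
  | zero => simp
  | succ m ih =>
    rw [← add_assoc, pow_succ, ← mul_assoc, mul_comm _ 2, (hA.isRefinement (n + m)).1, ih]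

theorem apply_lt_apply_of_lt {n a b : ℕ} (hab : a < b) (hb : b ≤ 2 ^ n) :
    gl.lt (A n a) (A n b) := by
  induction b, hab using Nat.le_induction with
  | base => exact (hA.isLevel n).2 a (by omega)
  | succ b hab ih =>
    exact lt_trans (hA.mem_L (by omega)) (hA.mem_L (by omega)) (hA.mem_L hb) (ih (by omega))
      ((hA.isLevel n).2 b (by omega))

theorem apply_lt_apply_iff {n a b : ℕ} (ha : a ≤ 2 ^ n) (hb : b ≤ 2 ^ n) :
    gl.lt (A n a) (A n b) ↔ a < b := by
  refine ⟨fun h => ?_, fun hab => hA.apply_lt_apply_of_lt hab hb⟩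
  by_contra hba
  obtain hba | rfl := (not_lt.mp hba).lt_or_eq
  · exact lt_asymm (hA.mem_L hb) (hA.mem_L ha) (hA.apply_lt_apply_of_lt hba ha) h
  · exact h.2 rfl

theorem eq_of_apply_eq {n a b : ℕ} (ha : a ≤ 2 ^ n) (hb : b ≤ 2 ^ n) (h : A n a = A n b) :
    a = b := by
  by_contra hab
  obtain hab | hab := Ne.lt_or_gt hab
  · exact (hA.apply_lt_apply_of_lt hab hb).2 h
  · exact (hA.apply_lt_apply_of_lt hab ha).2 h.symm

theorem monotone_c : Monotone c :=
  monotone_nat_of_le_succ fun n => le_of_add_le_left (hA.isRefinement n).2.2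

theorem add_pow_le {n N : ℕ} (h : n < N) : c n + 2 ^ n ≤ c N :=
  (hA.isRefinement n).2.2.trans (hA.monotone_c h)

theorem eq_of_add_eq {n n' k k' : ℕ} (hk : k < 2 ^ n) (hk' : k' < 2 ^ n')
    (h : c n + k = c n' + k') : n = n' ∧ k = k' := by
  obtain hn | rfl | hn := lt_trichotomy n n'
  · have := hA.add_pow_le hn; omega
  · omega
  · have := hA.add_pow_le hn; omega

theorem exists_eq_or_add_pow_le_vDepth {n N j : ℕ} (hN : n ≤ N) (hj : j ≤ 2 ^ N) :
    (∃ i ≤ 2 ^ n, A N j = A n i) ∨ c n + 2 ^ n ≤ gl.vDepth (A N j) := by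
  induction N, hN using Nat.le_induction generalizing j with
  | base => exact Or.inl ⟨j, hj, rfl⟩
  | succ N hN ih =>
    obtain ⟨i, rfl | rfl⟩ := Nat.even_or_odd' j
    · rw [(hA.isRefinement N).1 i]
      exact ih (by rw [pow_succ] at hj; omega)
    · right
      have hi : i < 2 ^ N := by rw [pow_succ] at hj; omega
      have := (hA.isRefinement N).2.1 i hi
      have := hA.monotone_c hN
      have := Nat.pow_le_pow_right two_pos hN
      omega

theorem exists_isPath_segment {n k : ℕ} (hk : k < 2 ^ n) :
    ∃ q : gl.union.Walk (A n k) (A n (k + 1)), q.IsPath ∧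
      (∀ e ∈ q.edges, e ∈ (gl.P (c n + k)).edges) ∧
      ∀ N j, n ≤ N → j ≤ 2 ^ N → A N j ∈ q.support → A N j = A n k ∨ A N j = A n (k + 1) := by
  have hk1 : gl.vDepth (A n k) < c n := hA.vDepth_lt hk.le
  have hk2 : gl.vDepth (A n (k + 1)) < c n := hA.vDepth_lt hk
  obtain ⟨q, hq, hqE, hqP, hqL⟩ := exists_isPath_between (m := c n + k)
    (u := A n k) (v := A n (k + 1)) (by omega)
    (hA.mem_L hk.le) (hA.mem_L hk) (by omega) (by omega) ((hA.isLevel n).2 k hk)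
  refine ⟨q, hq, hqE, fun N j hN hj hw => ?_⟩
  by_contra! hne
  have hdepth := (mem_support_iff_vDepth_le (hA.mem_L hj) _).mp (hqP _ hw)
  obtain ⟨i, hi, hji⟩ | hdeep := hA.exists_eq_or_add_pow_le_vDepth hN hj
  · rw [hji] at hw hne
    have hki := hqL _ hw (hA.mem_L hi) (by have := hA.vDepth_lt hi; omega) hne.1 hne.2
    rw [hA.apply_lt_apply_iff hk.le hi, hA.apply_lt_apply_iff hi hk] at hki
    omega
  · omega

theorem dyadicMap_eq {v : DyadicSet} {n k : ℕ} (hv : (v : ℚ) = k / 2 ^ n) :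
    dyadicMap A v = A n k := by
  obtain ⟨n₀, k₀, -, hv₀, h⟩ := exists_dyadicMap_eq A v
  rw [h, ← hA.apply_add_mul_two_pow n₀ k₀ n, ← hA.apply_add_mul_two_pow n k n₀, add_comm n,
    dyadic_eq_iff.mp (hv₀.symm.trans hv)]

theorem dyadicMap_injective : Function.Injective (dyadicMap A) := by
  intro a b hab
  obtain ⟨n, k, hk, ha, ha'⟩ := exists_dyadicMap_eq A a
  obtain ⟨n', k', hk', hb, hb'⟩ := exists_dyadicMap_eq A b
  rw [ha', hb', ← hA.apply_add_mul_two_pow n k n', ← hA.apply_add_mul_two_pow n' k' n,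
    add_comm n'] at hab
  have hidx := hA.eq_of_apply_eq (pow_add 2 n n' ▸ Nat.mul_le_mul_right _ hk)
    (pow_add 2 n n' ▸ mul_comm (2 ^ n) (2 ^ n') ▸ Nat.mul_le_mul_right _ hk') hab
  exact Subtype.ext (ha.trans ((dyadic_eq_iff.mpr hidx).trans hb.symm))

theorem exists_dyadicMap_eq_of_le (z : DyadicSet) (n : ℕ) :
    ∃ N ≥ n, ∃ j ≤ 2 ^ N, dyadicMap A z = A N j := by
  obtain ⟨n₀, k₀, hk₀, -, h⟩ := exists_dyadicMap_eq A z
  exact ⟨n₀ + n, by omega, k₀ * 2 ^ n, pow_add 2 n₀ n ▸ Nat.mul_le_mul_right _ hk₀,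
    h.trans (hA.apply_add_mul_two_pow n₀ k₀ n).symm⟩

theorem exists_isPath_dyadicMap {a b : DyadicSet} {n k : ℕ} (hk : k < 2 ^ n)
    (ha : (a : ℚ) = k / 2 ^ n) (hb : (b : ℚ) = (k + 1) / 2 ^ n) :
    ∃ p : gl.union.Walk (dyadicMap A a) (dyadicMap A b), p.IsPath ∧
      (∀ e ∈ p.edges, e ∈ (gl.P (c n + k)).edges) ∧
      ∀ w ∈ p.support, w ∈ Set.range (dyadicMap A) → w = dyadicMap A a ∨ w = dyadicMap A b := by
  rw [hA.dyadicMap_eq ha, hA.dyadicMap_eq (k := k + 1) (by rw [hb]; push_cast; rfl)]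
  obtain ⟨q, hq, hqE, hqA⟩ := hA.exists_isPath_segment hk
  refine ⟨q, hq, hqE, ?_⟩
  rintro w hw ⟨z, rfl⟩
  obtain ⟨N, hN, j, hj, hz⟩ := hA.exists_dyadicMap_eq_of_le z n
  rw [hz] at hw ⊢
  exact hqA N j hN hj hw

theorem pairwise_disjoint_routeEdges :
    Pairwise fun e e' => Disjoint (gl.routeEdges c e) (gl.routeEdges c e') := by
  intro e e' hne
  refine Set.disjoint_left.mpr ?_
  rintro f ⟨n, k, hk, he, hf⟩ ⟨n', k', hk', he', hf'⟩
  have hidx : c n + k = c n' + k' := by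
    by_contra h
    exact gl.edgeDisj _ _ h f hf hf'
  obtain ⟨rfl, rfl⟩ := hA.eq_of_add_eq hk hk' hidx
  exact hne (Sym2.map.injective Subtype.val_injective (he.trans he'.symm))

theorem exists_isPath_of_adj {a b : DyadicSet} (h : halvedFarey.Adj a b) :
    ∃ p : gl.union.Walk (dyadicMap A a) (dyadicMap A b), p.IsPath ∧
      (∀ e ∈ p.edges, e ∈ gl.routeEdges c s(a, b)) ∧
      ∀ w ∈ p.support, w ∈ Set.range (dyadicMap A) → w = dyadicMap A a ∨ w = dyadicMap A b := by
  obtain ⟨-, n, k, hk, ⟨ha, hb⟩ | ⟨hb, ha⟩⟩ := h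
  · obtain ⟨p, hp, hpE, hpA⟩ := hA.exists_isPath_dyadicMap hk ha hb
    exact ⟨p, hp, fun e he => ⟨n, k, hk, by simp [ha, hb], hpE e he⟩, hpA⟩
  · obtain ⟨p, hp, hpE, hpA⟩ := hA.exists_isPath_dyadicMap hk hb ha
    refine ⟨p.reverse, hp.reverse, fun e he => ⟨n, k, hk, ?_, hpE e (by simpa using he)⟩,
      fun w hw hwA => (hpA w (by simpa using hw) hwA).symm⟩
    simp [ha, hb, Sym2.eq_swap]

end DyadicScheme

end GrainLine

/-- the halved Farey graph is strongly immersed in the graph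
defined by any wildly presented grain line. -/
theorem halvedFarey_in_wildly_presented {V : Type*} {G : SimpleGraph V}
    {x y : V} (gl : GrainLine G x y) (hwp : gl.WildlyPresented) :
    StronglyImmersed halvedFarey gl.union := by
  obtain ⟨A, c, hA⟩ := GrainLine.exists_dyadicScheme hwp
  exact stronglyImmersed_of_forall_adj (dyadicMap A) hA.dyadicMap_injective (gl.routeEdges c)
    hA.pairwise_disjoint_routeEdges fun _ _ h => hA.exists_isPath_of_adj h
end
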